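/- Let F be a field of characteristic p > 2 and n, k integers with 2k > n. Then the first p-homology of the p-complex FΩ_• vanishes at degree k: every y ∈ FΩ_k with (y)φ = 0 lies in the image of φ^{p-1} : FΩ_{k+p-1} → FΩ_k. -/
import Mathlib


/-- The unsigned boundary map `φ`. -/
noncomputable def phi (n : ℕ) (F : Type) [Field F] :
    (Finset (Fin n) →₀ F) →ₗ[F] (Finset (Fin n) →₀ F) :=
  Finsupp.lsum F fun ω =>
    (LinearMap.id : F →ₗ[F] F).smulRight (∑ j ∈ ω, Finsupp.single (ω.erase j) (1 : F))

namespace KerPhiAux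

variable {n : ℕ} {F : Type} [Field F]

def SuppIn (P : Finset (Fin n) → Prop) (y : Finset (Fin n) →₀ F) : Prop :=
  ∀ S ∈ y.support, P S

lemma SuppIn.zero {P : Finset (Fin n) → Prop} : SuppIn P (0 : Finset (Fin n) →₀ F) := by
  intro S hS; simp at hS

lemma SuppIn.add {P : Finset (Fin n) → Prop} {y z : Finset (Fin n) →₀ F}
    (hy : SuppIn P y) (hz : SuppIn P z) : SuppIn P (y + z) := by
  intro S hS
  rcases Finset.mem_union.1 (Finsupp.support_add hS) with h | h
  exacts [hy S h, hz S h]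

lemma SuppIn.smul {P : Finset (Fin n) → Prop} {c : F} {y : Finset (Fin n) →₀ F}
    (hy : SuppIn P y) : SuppIn P (c • y) :=
  fun S hS => hy S (Finsupp.support_smul hS)

lemma SuppIn.neg {P : Finset (Fin n) → Prop} {y : Finset (Fin n) →₀ F} (hy : SuppIn P y) :
    SuppIn P (-y) := fun S hS => hy S (by simpa using hS)

lemma SuppIn.sub {P : Finset (Fin n) → Prop} {y z : Finset (Fin n) →₀ F}
    (hy : SuppIn P y) (hz : SuppIn P z) : SuppIn P (y - z) := by
  rw [sub_eq_add_neg]; exact hy.add hz.neg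

lemma phi_single (S : Finset (Fin n)) (c : F) :
    phi n F (Finsupp.single S c) = c • ∑ j ∈ S, Finsupp.single (S.erase j) (1 : F) := by
  simp [phi]

lemma phi_apply_eq_sum (y : Finset (Fin n) →₀ F) :
    phi n F y = y.sum fun ω c => c • ∑ j ∈ ω, Finsupp.single (ω.erase j) (1 : F) := by
  simp [phi, Finsupp.lsum_apply]

lemma mem_support_phi (y : Finset (Fin n) →₀ F) {S : Finset (Fin n)}
    (hS : S ∈ (phi n F y).support) : ∃ T ∈ y.support, ∃ j ∈ T, S = T.erase j := by
  classical
  rw [phi_apply_eq_sum] at hS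
  obtain ⟨T, hT, hS2⟩ := Finset.mem_biUnion.1 (Finsupp.support_sum hS)
  have hS3 := Finsupp.support_smul hS2
  obtain ⟨j, hj, hS4⟩ := Finset.mem_biUnion.1 (Finsupp.support_finset_sum hS3)
  have h5 := Finsupp.support_single_subset hS4
  simp only [Finset.mem_singleton] at h5
  exact ⟨T, hT, j, hj, h5⟩


lemma SuppIn.phi_pres {P : Finset (Fin n) → Prop} {y : Finset (Fin n) →₀ F} (h : SuppIn P y)
    (hP : ∀ T, P T → ∀ j ∈ T, P (T.erase j)) : SuppIn P (phi n F y) := by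
  intro S hS
  obtain ⟨T, hT, j, hj, rfl⟩ := mem_support_phi y hS
  exact hP T (h T hT) j hj

lemma SuppIn.pow_pres {P : Finset (Fin n) → Prop}
    (hP : ∀ T, P T → ∀ j ∈ T, P (T.erase j)) :
    ∀ (i : ℕ) {y : Finset (Fin n) →₀ F}, SuppIn P y → SuppIn P ((phi n F ^ i) y) := by
  intro i
  induction i with
  | zero => intro y h; simpa using h
  | succ i ih =>
      intro y h
      rw [pow_succ, Module.End.mul_apply]
      exact ih (h.phi_pres hP)

lemma deg_phi {d : ℕ} {y : Finset (Fin n) →₀ F}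
    (h : SuppIn (fun S => S.card = d + 1) y) :
    SuppIn (fun S => S.card = d) (phi n F y) := by
  intro S hS
  obtain ⟨T, hT, j, hj, rfl⟩ := mem_support_phi y hS
  rw [Finset.card_erase_of_mem hj, h T hT]
  omega

lemma deg_pow : ∀ (i : ℕ) {c : ℕ} {y : Finset (Fin n) →₀ F},
    SuppIn (fun S => S.card = c + i) y → SuppIn (fun S => S.card = c) ((phi n F ^ i) y) := by
  intro i
  induction i with
  | zero => intro c y h; simpa using h
  | succ i ih =>
      intro c y h
      rw [pow_succ, Module.End.mul_apply]
      exact ih (deg_phi (d := c + i) (by simpa [Nat.add_assoc] using h))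

noncomputable def Ea (a : Fin n) : (Finset (Fin n) →₀ F) →ₗ[F] (Finset (Fin n) →₀ F) :=
  Finsupp.lmapDomain F F (insert a)

lemma Ea_single (a : Fin n) (S : Finset (Fin n)) (c : F) :
    Ea (F := F) a (Finsupp.single S c) = Finsupp.single (insert a S) c := by
  simp [Ea, Finsupp.lmapDomain_apply, Finsupp.mapDomain_single]

lemma mem_support_Ea (a : Fin n) (v : Finset (Fin n) →₀ F) {S : Finset (Fin n)}
    (hS : S ∈ (Ea (F := F) a v).support) : ∃ T ∈ v.support, S = insert a T := by
  classical
  have := Finsupp.mapDomain_support (f := insert a) (s := v)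
  rw [Ea, Finsupp.lmapDomain_apply] at hS
  obtain ⟨T, hT, rfl⟩ := Finset.mem_image.1 (this hS)
  exact ⟨T, hT, rfl⟩

lemma phi_Ea_single (a : Fin n) {S : Finset (Fin n)} (hS : a ∉ S) (c : F) :
    phi n F (Ea (F := F) a (Finsupp.single S c))
      = Ea (F := F) a (phi n F (Finsupp.single S c)) + Finsupp.single S c := by
  classical
  rw [Ea_single, phi_single, phi_single, map_smul, map_sum]
  simp only [Ea_single]
  rw [Finset.sum_insert hS, Finset.erase_insert hS, smul_add]
  have hcongr : ∀ j ∈ S, (insert a S).erase j = insert a (S.erase j) := by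
    intro j hj
    exact Finset.erase_insert_of_ne (fun h => hS (h ▸ hj))
  rw [Finset.sum_congr rfl (fun j hj => by rw [hcongr j hj])]
  rw [Finsupp.smul_single, smul_eq_mul, mul_one]
  abel

lemma phi_Ea (a : Fin n) (v : Finset (Fin n) →₀ F) (h : SuppIn (fun S => a ∉ S) v) :
    phi n F (Ea (F := F) a v) = Ea (F := F) a (phi n F v) + v := by
  classical
  have hv : v = v.sum Finsupp.single := (Finsupp.sum_single v).symm
  rw [hv]
  rw [map_finsuppSum (Ea (F := F) a), map_finsuppSum (phi n F),
    map_finsuppSum (phi n F), map_finsuppSum (Ea (F := F) a)]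
  rw [← Finsupp.sum_add]
  exact Finsupp.sum_congr fun S hSv => phi_Ea_single a (h S hSv) (v S)

lemma pow_phi_Ea (a : Fin n) :
    ∀ (i : ℕ) (v : Finset (Fin n) →₀ F), SuppIn (fun S => a ∉ S) v →
      (phi n F ^ (i + 1)) (Ea (F := F) a v)
        = Ea (F := F) a ((phi n F ^ (i + 1)) v) + ((i + 1 : ℕ) : F) • (phi n F ^ i) v := by
  intro i
  induction i with
  | zero =>
      intro v h
      simpa [pow_one] using phi_Ea a v h
  | succ i ih =>
      intro v h
      have havoid : SuppIn (fun S => a ∉ S) (phi n F v) :=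
        h.phi_pres (fun T hT j _ => fun hmem => hT (Finset.mem_of_mem_erase hmem))
      have h1 : (phi n F ^ (i + 1)) (phi n F v) = (phi n F ^ (i + 1 + 1)) v := by
        rw [← Module.End.mul_apply, ← pow_succ]
      have h2 : (phi n F ^ i) (phi n F v) = (phi n F ^ (i + 1)) v := by
        rw [← Module.End.mul_apply, ← pow_succ]
      have h0 : (phi n F ^ (i + 1)) (phi n F (Ea (F := F) a v))
          = (phi n F ^ (i + 1 + 1)) (Ea (F := F) a v) := by
        rw [← Module.End.mul_apply, ← pow_succ]
      rw [← h0, phi_Ea a v h, map_add, ih (phi n F v) havoid, h1, h2]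
      have h3 : ((i + 1 + 1 : ℕ) : F) = ((i + 1 : ℕ) : F) + 1 := by push_cast; ring
      rw [h3, add_smul, one_smul]
      abel


lemma Ea_zero_of (a : Fin n) {z : Finset (Fin n) →₀ F} (hz : SuppIn (fun S => a ∉ S) z)
    (h : Ea (F := F) a z = 0) : z = 0 := by
  classical
  have : Finsupp.mapDomain (fun S : Finset (Fin n) => S.erase a) (Ea (F := F) a z) = z := by
    rw [Ea, Finsupp.lmapDomain_apply, ← Finsupp.mapDomain_comp]
    rw [Finsupp.mapDomain_congr (g := id) (fun S hS => by
      simp only [Function.comp_apply, id_eq]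
      exact Finset.erase_insert (hz S hS))]
    exact Finsupp.mapDomain_id
  rw [h] at this
  simpa using this.symm

lemma split_zero (a : Fin n) {z₀ z₁ : Finset (Fin n) →₀ F}
    (h0 : SuppIn (fun S => a ∉ S) z₀) (h1 : SuppIn (fun S => a ∉ S) z₁)
    (h : z₀ + Ea (F := F) a z₁ = 0) : z₀ = 0 ∧ z₁ = 0 := by
  classical
  have hfilter := congrArg (Finsupp.filter (fun S : Finset (Fin n) => a ∈ S)) h
  rw [Finsupp.filter_add] at hfilter
  have e0 : Finsupp.filter (fun S : Finset (Fin n) => a ∈ S) z₀ = 0 := by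
    ext S
    by_cases hmem : a ∈ S
    · by_cases hsup : S ∈ z₀.support
      · exact absurd hmem (h0 S hsup)
      · simp [Finsupp.filter_apply, hmem, Finsupp.notMem_support_iff.1 hsup]
    · simp [Finsupp.filter_apply, hmem]
  have e1 : Finsupp.filter (fun S : Finset (Fin n) => a ∈ S) (Ea (F := F) a z₁)
      = Ea (F := F) a z₁ := by
    ext S
    by_cases hmem : a ∈ S
    · simp [Finsupp.filter_apply, hmem]
    · by_cases hsup : S ∈ (Ea (F := F) a z₁).support
      · obtain ⟨T, _, rfl⟩ := mem_support_Ea a z₁ hsup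
        exact absurd (Finset.mem_insert_self a T) hmem
      · simp [Finsupp.filter_apply, hmem, Finsupp.notMem_support_iff.1 hsup]
  rw [e0, e1, zero_add] at hfilter
  simp only [Finsupp.filter_zero] at hfilter
  have hz1 : z₁ = 0 := Ea_zero_of a h1 hfilter
  constructor
  · rw [hz1, map_zero, add_zero] at h; exact h
  · exact hz1

lemma split (a : Fin n) (m k₁ : ℕ) (ham : (a : ℕ) = m) (y : Finset (Fin n) →₀ F)
    (hdeg : SuppIn (fun S => S.card = k₁ + 1) y)
    (hlt : SuppIn (fun S => ∀ i ∈ S, (i : ℕ) < m + 1) y) :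
    ∃ y₀ y₁ : Finset (Fin n) →₀ F, y = y₀ + Ea (F := F) a y₁ ∧
      SuppIn (fun S => S.card = k₁ + 1) y₀ ∧ SuppIn (fun S => S.card = k₁) y₁ ∧
      SuppIn (fun S => ∀ i ∈ S, (i : ℕ) < m) y₀ ∧
      SuppIn (fun S => ∀ i ∈ S, (i : ℕ) < m) y₁ := by
  classical
  set y₀ := Finsupp.filter (fun S : Finset (Fin n) => a ∉ S) y with hy₀
  set yA := Finsupp.filter (fun S : Finset (Fin n) => a ∈ S) y with hyA
  set y₁ := Finsupp.mapDomain (fun S : Finset (Fin n) => S.erase a) yA with hy₁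
  have hsuppA : ∀ S ∈ yA.support, a ∈ S ∧ S ∈ y.support := by
    intro S hS
    rw [hyA, Finsupp.support_filter, Finset.mem_filter] at hS
    exact ⟨hS.2, hS.1⟩
  have hsupp0 : ∀ S ∈ y₀.support, a ∉ S ∧ S ∈ y.support := by
    intro S hS
    rw [hy₀, Finsupp.support_filter, Finset.mem_filter] at hS
    exact ⟨hS.2, hS.1⟩
  have hsupp1 : ∀ S ∈ y₁.support, ∃ T ∈ y.support, a ∈ T ∧ S = T.erase a := by
    intro S hS
    rw [hy₁] at hS
    obtain ⟨T, hT, rfl⟩ := Finset.mem_image.1 (Finsupp.mapDomain_support hS)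
    obtain ⟨h1, h2⟩ := hsuppA T hT
    exact ⟨T, h2, h1, rfl⟩
  refine ⟨y₀, y₁, ?_, ?_, ?_, ?_, ?_⟩
  · have hEa : Ea (F := F) a y₁ = yA := by
      rw [hy₁, Ea, Finsupp.lmapDomain_apply, ← Finsupp.mapDomain_comp]
      rw [Finsupp.mapDomain_congr (g := id) (fun S hS => by
        simp only [Function.comp_apply, id_eq]
        exact Finset.insert_erase (hsuppA S hS).1)]
      exact Finsupp.mapDomain_id
    rw [hEa, hy₀, hyA, add_comm]
    exact (Finsupp.filter_pos_add_filter_neg y (fun S : Finset (Fin n) => a ∈ S)).symm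
  · intro S hS; exact hdeg S (hsupp0 S hS).2
  · intro S hS
    obtain ⟨T, hT, haT, rfl⟩ := hsupp1 S hS
    rw [Finset.card_erase_of_mem haT, hdeg T hT]
    omega
  · intro S hS i hi
    obtain ⟨hna, hy⟩ := hsupp0 S hS
    have := hlt S hy i hi
    have hne : (i : ℕ) ≠ m := fun hc => hna (by
      have : i = a := Fin.ext (by rw [ham, hc])
      exact this ▸ hi)
    omega
  · intro S hS i hi
    obtain ⟨T, hT, haT, rfl⟩ := hsupp1 S hS
    have := hlt T hT i (Finset.mem_of_mem_erase hi)
    have hne : (i : ℕ) ≠ m := fun hc => (Finset.ne_of_mem_erase hi) (Fin.ext (by rw [ham, hc]))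
    omega


lemma SuppIn.mono {P Q : Finset (Fin n) → Prop} {y : Finset (Fin n) →₀ F}
    (h : SuppIn P y) (hPQ : ∀ S, P S → Q S) : SuppIn Q y :=
  fun S hS => hPQ S (h S hS)

lemma pow_apply_pow (A B : ℕ) (y : Finset (Fin n) →₀ F) :
    (phi n F ^ A) ((phi n F ^ B) y) = (phi n F ^ (A + B)) y := by
  rw [pow_add, Module.End.mul_apply]

lemma phi_pow_succ (B : ℕ) (y : Finset (Fin n) →₀ F) :
    phi n F ((phi n F ^ B) y) = (phi n F ^ (B + 1)) y := by
  rw [pow_succ', Module.End.mul_apply]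

lemma pow_apply_phi (A : ℕ) (y : Finset (Fin n) →₀ F) :
    (phi n F ^ A) (phi n F y) = (phi n F ^ (A + 1)) y := by
  rw [pow_succ, Module.End.mul_apply]

lemma main (p : ℕ) [CharP F p] :
    ∀ m : ℕ, m ≤ n → ∀ s : ℕ, s ≤ p → ∀ k : ℕ, ∀ y : Finset (Fin n) →₀ F,
      SuppIn (fun S => S.card = k) y →
      SuppIn (fun S => ∀ i ∈ S, (i : ℕ) < m) y →
      m + s ≤ 2 * k → (phi n F ^ s) y = 0 →
      ∃ x : Finset (Fin n) →₀ F,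
        SuppIn (fun S => S.card = k + (p - s)) x ∧
        SuppIn (fun S => ∀ i ∈ S, (i : ℕ) < m) x ∧ (phi n F ^ (p - s)) x = y := by
  intro m
  induction m with
  | zero =>
      intro _ s hs k y hdeg hlt hks hker
      have hy : y = 0 := by
        rcases Nat.eq_zero_or_pos s with rfl | hs1
        · simpa using hker
        · ext S
          by_cases hS : S ∈ y.support
          · rcases Finset.eq_empty_or_nonempty S with rfl | ⟨i, hi⟩
            · have := hdeg ∅ hS; simp at this; omega
            · exact absurd (hlt S hS i hi) (by omega)
          · simp [Finsupp.notMem_support_iff.1 hS]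
      exact ⟨0, SuppIn.zero, SuppIn.zero, by rw [map_zero, hy]⟩
  | succ m ih =>
      intro hmn s hs k y hdeg hlt hks hker
      have hm_le : m ≤ n := le_trans (Nat.le_succ m) hmn
      rcases Nat.eq_zero_or_pos s with rfl | hs1
      · have hy : y = 0 := by simpa using hker
        exact ⟨0, SuppIn.zero, SuppIn.zero, by rw [map_zero, hy]⟩
      rcases eq_or_lt_of_le hs with rfl | hsp
      · refine ⟨y, hdeg.mono (fun S hS => by omega), hlt, ?_⟩
        rw [Nat.sub_self, pow_zero, Module.End.one_apply]
      -- now 1 ≤ s < p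
      obtain ⟨s', rfl⟩ : ∃ s', s = s' + 1 := ⟨s - 1, by omega⟩
      obtain ⟨q', hq'⟩ : ∃ q', p = s' + 1 + (q' + 1) := ⟨p - s' - 2, by omega⟩
      have hpq : p - (s' + 1) = q' + 1 := by omega
      obtain ⟨k₁, rfl⟩ : ∃ k₁, k = k₁ + 1 := ⟨k - 1, by omega⟩
      have ha_lt : m < n := by omega
      set a : Fin n := ⟨m, ha_lt⟩ with ha_def
      have ham : (a : ℕ) = m := rfl
      obtain ⟨y₀, y₁, hysum, hdeg0, hdeg1, hlt0, hlt1⟩ := split a m k₁ ham y hdeg hlt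
      have hAvoidOf : ∀ z : Finset (Fin n) →₀ F,
          SuppIn (fun S => ∀ i ∈ S, (i : ℕ) < m) z → SuppIn (fun S => a ∉ S) z := by
        intro z hz S hS hmem
        have := hz S hS a hmem
        rw [ham] at this; omega
      have hAvoidPres : ∀ T : Finset (Fin n), a ∉ T → ∀ j ∈ T, a ∉ T.erase j :=
        fun T hT j _ hmem => hT (Finset.mem_of_mem_erase hmem)
      have hLtPres : ∀ T : Finset (Fin n), (∀ i ∈ T, (i : ℕ) < m) →
          ∀ j ∈ T, ∀ i ∈ T.erase j, (i : ℕ) < m :=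
        fun T hT j _ i hi => hT i (Finset.mem_of_mem_erase hi)
      -- extract the two component equations
      have hker' : ((phi n F ^ (s' + 1)) y₀ + ((s' + 1 : ℕ) : F) • (phi n F ^ s') y₁)
          + Ea (F := F) a ((phi n F ^ (s' + 1)) y₁) = 0 := by
        rw [hysum, map_add, pow_phi_Ea a s' y₁ (hAvoidOf y₁ hlt1)] at hker
        abel_nf at hker ⊢
        exact hker
      obtain ⟨hE1, hE2⟩ := split_zero a
        ((((hAvoidOf y₀ hlt0).pow_pres hAvoidPres (s' + 1))).add
          (((hAvoidOf y₁ hlt1).pow_pres hAvoidPres s').smul))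
        ((hAvoidOf y₁ hlt1).pow_pres hAvoidPres (s' + 1)) hker'
      have hsne : ((s' + 1 : ℕ) : F) ≠ 0 := by
        intro hc
        have := (CharP.cast_eq_zero_iff F p (s' + 1)).1 hc
        have := Nat.le_of_dvd (by omega) this
        omega
      by_cases hcase : m + (s' + 1) ≤ 2 * k₁
      · -- Case A
        obtain ⟨w, hwdeg, hwlt, hw⟩ := ih hm_le (s' + 1) (by omega) k₁ y₁ hdeg1 hlt1 hcase hE2
        rw [hpq] at hwdeg hw
        set u' := y₀ - ((q' + 1 : ℕ) : F) • (phi n F ^ q') w with hu'def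
        have hu'deg : SuppIn (fun S => S.card = k₁ + 1) u' :=
          hdeg0.sub ((deg_pow q' (c := k₁ + 1)
            (hwdeg.mono (fun S hS => by omega))).smul)
        have hu'lt : SuppIn (fun S => ∀ i ∈ S, (i : ℕ) < m) u' :=
          hlt0.sub ((SuppIn.pow_pres hLtPres q' hwlt).smul)
        have hb2 : (phi n F ^ s') y₁ = (phi n F ^ (s' + 1 + q')) w := by
          rw [← hw, pow_apply_pow, show s' + (q' + 1) = s' + 1 + q' from by omega]
        have hE1' : (phi n F ^ (s' + 1)) y₀
            = -((s' + 1 : ℕ) : F) • (phi n F ^ (s' + 1 + q')) w := by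
          have h := eq_neg_of_add_eq_zero_left hE1
          rw [h, hb2, ← neg_smul]
        have hu'ker : (phi n F ^ (s' + 1)) u' = 0 := by
          rw [hu'def, map_sub, map_smul, pow_apply_pow, hE1']
          rw [← sub_smul]
          have hc0 : -((s' + 1 : ℕ) : F) - ((q' + 1 : ℕ) : F) = 0 := by
            have hp0 : ((p : ℕ) : F) = 0 := CharP.cast_eq_zero F p
            rw [hq'] at hp0
            push_cast at hp0 ⊢
            linear_combination -hp0
          rw [hc0, zero_smul]
        obtain ⟨x', hx'deg, hx'lt, hx'⟩ := ih hm_le (s' + 1) (by omega) (k₁ + 1) u'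
          hu'deg hu'lt (by omega) hu'ker
        rw [hpq] at hx'deg hx'
        refine ⟨x' + Ea (F := F) a w, ?_, ?_, ?_⟩
        · rw [hpq]
          refine (hx'deg.add ?_)
          intro S hS
          obtain ⟨T, hT, rfl⟩ := mem_support_Ea a w hS
          rw [Finset.card_insert_of_notMem (hAvoidOf w hwlt T hT), hwdeg T hT]
          omega
        · refine ((hx'lt.mono (fun S hS i hi => by have := hS i hi; omega)).add ?_)
          intro S hS i hi
          obtain ⟨T, hT, rfl⟩ := mem_support_Ea a w hS
          rcases Finset.mem_insert.1 hi with rfl | hi'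
          · rw [ham]; omega
          · have := hwlt T hT i hi'; omega
        · rw [hpq, map_add, pow_phi_Ea a q' w (hAvoidOf w hwlt), hx', hw, hysum, hu'def]
          abel
      · -- Case B : m + s' = 2 * k₁
        have hmB : m + s' = 2 * k₁ := by omega
        have ht0 : (phi n F ^ (s' + 1 + 1)) y₀ = 0 := by
          have h := congrArg (phi n F) hE1
          rw [map_add, map_smul, phi_pow_succ, phi_pow_succ, hE2, smul_zero, add_zero,
            map_zero] at h
          exact h
        obtain ⟨t, htdeg, htlt, ht⟩ := ih hm_le (s' + 1 + 1) (by omega) (k₁ + 1) y₀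
          hdeg0 hlt0 (by omega) ht0
        have hpq2 : p - (s' + 1 + 1) = q' := by omega
        rw [hpq2] at htdeg ht
        set c : F := ((s' + 1 : ℕ) : F) with hc_def
        set v₁ := y₁ + c⁻¹ • (phi n F ^ (q' + 1)) t with hv₁def
        have hv₁deg : SuppIn (fun S => S.card = k₁) v₁ :=
          hdeg1.add ((deg_pow (q' + 1) (c := k₁)
            (htdeg.mono (fun S hS => by omega))).smul)
        have hv₁lt : SuppIn (fun S => ∀ i ∈ S, (i : ℕ) < m) v₁ :=
          hlt1.add ((SuppIn.pow_pres hLtPres (q' + 1) htlt).smul)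
        have hP : (phi n F ^ (s' + 1)) y₀ = (phi n F ^ (s' + 1 + q')) t := by
          rw [← ht, pow_apply_pow]
        have hQ : (phi n F ^ s') ((phi n F ^ (q' + 1)) t)
            = (phi n F ^ (s' + 1 + q')) t := by
          rw [pow_apply_pow, show s' + (q' + 1) = s' + 1 + q' from by omega]
        have hy1s : (phi n F ^ s') y₁ = -(c⁻¹) • (phi n F ^ (s' + 1 + q')) t := by
          have h2 : c • (phi n F ^ s') y₁ = -((phi n F ^ (s' + 1 + q')) t) := by
            rw [← hP]
            exact eq_neg_of_add_eq_zero_right hE1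
          calc (phi n F ^ s') y₁ = c⁻¹ • (c • (phi n F ^ s') y₁) :=
                (inv_smul_smul₀ hsne _).symm
            _ = c⁻¹ • -((phi n F ^ (s' + 1 + q')) t) := by rw [h2]
            _ = -(c⁻¹) • (phi n F ^ (s' + 1 + q')) t := by rw [smul_neg, neg_smul]
        have hv₁ker : (phi n F ^ s') v₁ = 0 := by
          rw [hv₁def, map_add, map_smul, hQ, hy1s, neg_smul]
          abel
        obtain ⟨z, hzdeg, hzlt, hz⟩ := ih hm_le s' (by omega) k₁ v₁ hv₁deg hv₁lt
          (by omega) hv₁ker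
        have hpq3 : p - s' = q' + 1 + 1 := by omega
        rw [hpq3] at hzdeg hz
        set w := phi n F z - c⁻¹ • t with hwdef
        have hwdeg : SuppIn (fun S => S.card = k₁ + (q' + 1)) w :=
          (deg_phi (d := k₁ + (q' + 1)) (hzdeg.mono (fun S hS => by omega))).sub
            ((htdeg.mono (fun S hS => by omega)).smul)
        have hwlt : SuppIn (fun S => ∀ i ∈ S, (i : ℕ) < m) w :=
          (hzlt.phi_pres hLtPres).sub (htlt.smul)
        have hphiz : phi n F z = (phi n F ^ 1) z := by rw [pow_one]
        have hw : (phi n F ^ (q' + 1)) w = y₁ := by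
          rw [hwdef, map_sub, map_smul, hphiz, pow_apply_pow, hz, hv₁def]
          abel
        refine ⟨c • z + Ea (F := F) a w, ?_, ?_, ?_⟩
        · rw [hpq]
          refine ((hzdeg.mono (fun S hS => by omega)).smul).add ?_
          intro S hS
          obtain ⟨T, hT, rfl⟩ := mem_support_Ea a w hS
          rw [Finset.card_insert_of_notMem (hAvoidOf w hwlt T hT), hwdeg T hT]
          omega
        · refine ((hzlt.mono (fun S hS i hi => by have := hS i hi; omega)).smul).add ?_
          intro S hS i hi
          obtain ⟨T, hT, rfl⟩ := mem_support_Ea a w hS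
          rcases Finset.mem_insert.1 hi with rfl | hi'
          · rw [ham]; omega
          · have := hwlt T hT i hi'; omega
        · rw [hpq, map_add, map_smul, pow_phi_Ea a q' w (hAvoidOf w hwlt), hw]
          have hqw : (phi n F ^ q') w = (phi n F ^ (q' + 1)) z - c⁻¹ • y₀ := by
            rw [hwdef, map_sub, map_smul, hphiz, pow_apply_pow, ht]
          rw [hqw, hysum]
          have hc1 : ((q' + 1 : ℕ) : F) = -c := by
            have hp0 : ((p : ℕ) : F) = 0 := CharP.cast_eq_zero F p
            rw [hq'] at hp0
            rw [hc_def]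
            push_cast at hp0 ⊢
            linear_combination hp0
          rw [hc1, smul_sub, smul_smul]
          have hcc : (-c) * c⁻¹ = -1 := by field_simp
          rw [hcc, neg_one_smul, neg_smul]
          abel

end KerPhiAux

/-- for `char F = p > 2` and `2k > n`, the first `p`-homology of the
`p`-complex `FΩ_•` vanishes at degree `k`: every `y ∈ FΩ_k` (supported on `k`-subsets)
with `(y)φ = 0` is of the form `(x)φ^{p-1}` for some `x ∈ FΩ_{k+p-1}`. -/
theorem ker_phi_eq_im_phi_pow (n k p : ℕ) (hp : p.Prime) (hp2 : 2 < p)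
    (F : Type) [Field F] [CharP F p] (h2k : n < 2 * k)
    (y : Finset (Fin n) →₀ F) (hk : ∀ S ∈ y.support, S.card = k)
    (hker : phi n F y = 0) :
    ∃ x : Finset (Fin n) →₀ F, (∀ S ∈ x.support, S.card = k + p - 1) ∧
      ((phi n F) ^ (p - 1)) x = y := by
  have hp1 : 1 ≤ p := hp.one_lt.le.trans' (by omega)
  obtain ⟨x, hxdeg, -, hx⟩ := KerPhiAux.main (F := F) p n le_rfl 1 (by omega) k y hk
    (fun S _ i _ => i.isLt) (by omega) (by rw [pow_one]; exact hker)
  refine ⟨x, fun S hS => ?_, hx⟩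
  have := hxdeg S hS
  omega
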